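/- arXiv:1503.01273 — 2 statements merged into one kernel-verified Lean document; each statement's English description precedes it below -/
import Mathlib

section
/- Let f ∈ ℝ^{d_1×…×d_m} with f ≥ 0 and f ≠ 0, and 1 < p_1,…,p_m < ∞. Then there exists a singular vector x* ∈ S^d_+ of f such that Q(x*) = ‖f‖_{p_1,…,p_m}. -/
/-!
Common setup: tensors `f : (∀ i, Fin (d i)) → ℝ`, the induced multilinear form,
partial gradients, `ψ_q`, `ℓ^p` norms, Hölder conjugates, singular vectors,
(weak) irreducibility, the maps `σ_i`, `s_{i,k}`, `T_α`, `G`, the quantities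
`Q`, `‖f‖_{p_1,…,p_m}`, `Q_i`, `γ_i^±` and the Hilbert-type metric `μ`.
Points of `ℝ^{d-d_i}` are encoded as full tuples (the maps involved do not
depend on the `i`-th component), with conditions imposed only for `k ≠ i`.
-/

open Finset Filter

noncomputable section

namespace TensorPF

variable {m : ℕ} {d : Fin m → ℕ}

/-- The multilinear form induced by the tensor `f`. -/
def form (f : (∀ i, Fin (d i)) → ℝ) (x : ∀ i, Fin (d i) → ℝ) : ℝ :=
  ∑ j : ∀ i, Fin (d i), f j * ∏ i, x i (j i)

/-- The gradient of the multilinear form in its `i`-th argument. -/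
def grad (f : (∀ i, Fin (d i)) → ℝ) (i : Fin m) (x : ∀ i, Fin (d i) → ℝ) :
    Fin (d i) → ℝ :=
  fun ji => form f (Function.update x i (fun l => if l = ji then (1 : ℝ) else 0))

/-- `ψ_q(y)_j = |y_j|^(q-1) sign(y_j)`. -/
def psi (q : ℝ) {n : ℕ} (y : Fin n → ℝ) : Fin n → ℝ :=
  fun j => |y j| ^ (q - 1) * Real.sign (y j)

/-- The `ℓ^q`-norm on `Fin n → ℝ`. -/
def pnorm (q : ℝ) {n : ℕ} (y : Fin n → ℝ) : ℝ :=
  (∑ j, |y j| ^ q) ^ (1 / q)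

/-- The Hölder conjugate `q' = q/(q-1)`. -/
def conjExp (q : ℝ) : ℝ := q / (q - 1)

/-- `σ_i(x) = sign(f(x)) ψ_{p_i'}(∇_i f(x))`. -/
def sigma (f : (∀ i, Fin (d i)) → ℝ) (p : Fin m → ℝ) (i : Fin m)
    (x : ∀ i, Fin (d i) → ℝ) : Fin (d i) → ℝ :=
  fun ji => Real.sign (form f x) * psi (conjExp (p i)) (grad f i x) ji

/-- `Q(x) = |f(x)| / ∏ i ‖x_i‖_{p_i}`. -/
def Qform (f : (∀ i, Fin (d i)) → ℝ) (p : Fin m → ℝ)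
    (x : ∀ i, Fin (d i) → ℝ) : ℝ :=
  |form f x| / ∏ i, pnorm (p i) (x i)

/-- The projective tensor norm `‖f‖_{p_1,…,p_m} = sup Q`. -/
def tnorm (f : (∀ i, Fin (d i)) → ℝ) (p : Fin m → ℝ) : ℝ :=
  sSup {q : ℝ | ∃ x : ∀ i, Fin (d i) → ℝ, (∀ i, x i ≠ 0) ∧ q = Qform f p x}

/-- `x ∈ S^d` is a singular vector of `f` with singular value `lam` if
`σ_i(x) = lam^{p_i'-1} x_i` for all `i`. -/
def IsSingular (f : (∀ i, Fin (d i)) → ℝ) (p : Fin m → ℝ) (lam : ℝ)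
    (x : ∀ i, Fin (d i) → ℝ) : Prop :=
  (∀ i, pnorm (p i) (x i) = 1) ∧
  ∀ i ji, sigma f p i x ji = lam ^ (conjExp (p i) - 1) * x i ji

/-- `s_{i,k}(x) = ψ_{p_k'}(∇_k f(x_1,…,ψ_{p_i'}(∇_i f(x)),…,x_m))`. -/
def sik (f : (∀ i, Fin (d i)) → ℝ) (p : Fin m → ℝ) (i k : Fin m)
    (x : ∀ l, Fin (d l) → ℝ) : Fin (d k) → ℝ :=
  psi (conjExp (p k))
    (grad f k (Function.update x i (psi (conjExp (p i)) (grad f i x))))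

/-- The `m`-partite graph associated to a nonnegative tensor. -/
def wGraph (f : (∀ i, Fin (d i)) → ℝ) : SimpleGraph ((k : Fin m) × Fin (d k)) where
  Adj a b := a.1 ≠ b.1 ∧ ∃ j : ∀ l, Fin (d l), j a.1 = a.2 ∧ j b.1 = b.2 ∧ 0 < f j
  symm := by
    constructor
    rintro a b ⟨h, j, h1, h2, h3⟩
    exact ⟨h.symm, j, h2, h1, h3⟩
  loopless := by constructor; rintro a ⟨h, -⟩; exact h rfl

/-- `f ≥ 0` is weakly irreducible if its graph is connected. -/
def WeaklyIrreducible (f : (∀ i, Fin (d i)) → ℝ) : Prop := (wGraph f).Connected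

/-- `f ≥ 0` is irreducible. -/
def Irreducible (f : (∀ i, Fin (d i)) → ℝ) : Prop :=
  ∀ J : Set ((k : Fin m) × Fin (d k)), J.Nonempty → J ≠ Set.univ →
    ∃ (k : Fin m) (j : ∀ l, Fin (d l)),
      (⟨k, j k⟩ : (l : Fin m) × Fin (d l)) ∈ J ∧
      (∀ l, l ≠ k → (⟨l, j l⟩ : (l : Fin m) × Fin (d l)) ∉ J) ∧ 0 < f j

/-- `T_α(z) = α_0 z + (α_1 σ_1(z),…,α_m σ_m(z))`. -/
def Tmap (f : (∀ i, Fin (d i)) → ℝ) (p : Fin m → ℝ) (a0 : ℝ) (a : Fin m → ℝ)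
    (z : ∀ i, Fin (d i) → ℝ) : ∀ i, Fin (d i) → ℝ :=
  fun i ji => a0 * z i ji + a i * sigma f p i z ji

/-- `Q_i(x) = ‖∇_i f(x)‖_{p_i'} / ∏_{k ≠ i} ‖x_k‖_{p_k}`. -/
def Qi (f : (∀ i, Fin (d i)) → ℝ) (p : Fin m → ℝ) (i : Fin m)
    (x : ∀ l, Fin (d l) → ℝ) : ℝ :=
  pnorm (conjExp (p i)) (grad f i x) / ∏ k ∈ Finset.univ.erase i, pnorm (p k) (x k)

/-- A critical point of `Q_i` with critical value `lam`. -/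
def IsCritQi (f : (∀ i, Fin (d i)) → ℝ) (p : Fin m → ℝ) (i : Fin m) (lam : ℝ)
    (x : ∀ l, Fin (d l) → ℝ) : Prop :=
  (∀ k, k ≠ i → pnorm (p k) (x k) = 1) ∧ grad f i x ≠ 0 ∧
  ∀ k, k ≠ i → ∀ jk,
    sik f p i k x jk = lam ^ (conjExp (p i) * (conjExp (p k) - 1)) * x k jk

/-- Collatz–Wielandt ratio `γ_i^-`. -/
def gammaMinus (f : (∀ i, Fin (d i)) → ℝ) (p : Fin m → ℝ) (i : Fin m)
    (x : ∀ l, Fin (d l) → ℝ) : ℝ :=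
  ∏ k ∈ Finset.univ.erase i, ⨅ jk : Fin (d k), (sik f p i k x jk / x k jk) ^ (p k - 1)

/-- Collatz–Wielandt ratio `γ_i^+`. -/
def gammaPlus (f : (∀ i, Fin (d i)) → ℝ) (p : Fin m → ℝ) (i : Fin m)
    (x : ∀ l, Fin (d l) → ℝ) : ℝ :=
  ∏ k ∈ Finset.univ.erase i, ⨆ jk : Fin (d k), (sik f p i k x jk / x k jk) ^ (p k - 1)

/-- The power-method map `G(x) = (s_{i,k}(x)/‖s_{i,k}(x)‖_{p_k})_{k≠i}`. -/
def Gmap (f : (∀ i, Fin (d i)) → ℝ) (p : Fin m → ℝ) (i : Fin m)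
    (x : ∀ l, Fin (d l) → ℝ) : ∀ l, Fin (d l) → ℝ :=
  fun k jk => sik f p i k x jk / pnorm (p k) (sik f p i k x)

/-- The Hilbert-type metric `μ` on `S^{d-d_i}_{++}`. -/
def mu (p : Fin m → ℝ) (i : Fin m) (x y : ∀ l, Fin (d l) → ℝ) : ℝ :=
  Real.log (∏ l ∈ Finset.univ.erase i,
    (⨆ jl : Fin (d l), (x l jl / y l jl) ^ (p l - 1)) /
    (⨅ jl : Fin (d l), (x l jl / y l jl) ^ (p l - 1)))


/-! The maximum `λ` of the form on the compact set `S^d_+` is attained at some `x`. Since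
`|f(z)| ≤ f(|z|)` and `f` is homogeneous in each slot, `λ` bounds `Q` everywhere, so
`Q(x) = λ = ‖f‖`. In slot `i`, `y ↦ f(x_1,…,y,…,x_m) = ⟨y, ∇_i f(x)⟩` is then bounded by
`λ ‖y‖_{p_i}`, hence `‖∇_i f(x)‖_{p_i'} ≤ λ = ⟨x_i, ∇_i f(x)⟩`: Hölder's inequality is an
equality, and the equality case of Young's inequality gives `ψ_{p_i'}(∇_i f(x)) = λ^{p_i'-1} x_i`.
-/

section Holder

variable {ι : Type*} [Fintype ι] {p q : ℝ}

theorem rpow_sub_one_eq_of_sum_mul_eq_one (hpq : p.HolderConjugate q) {x y : ι → ℝ}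
    (hx : 0 ≤ x) (hy : 0 ≤ y) (hxp : ∑ k, x k ^ p = 1)
    (hyq : ∑ k, y k ^ q ≤ 1) (hxy : ∑ k, x k * y k = 1) (k : ι) :
    y k ^ (q - 1) = x k := by
  have hslack : ∀ k ∈ univ, 0 ≤ x k ^ p / p + y k ^ q / q - x k * y k := fun k _ =>
    sub_nonneg.2 (Real.young_inequality_of_nonneg (hx k) (hy k) hpq)
  have hsum : ∑ k, (x k ^ p / p + y k ^ q / q - x k * y k) = 0 := by
    refine le_antisymm ?_ (sum_nonneg hslack)
    rw [sum_sub_distrib, sum_add_distrib, ← sum_div, ← sum_div, hxp, hxy]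
    linarith [div_le_div_of_nonneg_right hyq hpq.symm.nonneg, hpq.one_div_add_one_div]
  have hyoung : x k * y k = x k ^ p / p + y k ^ q / q := by
    linarith [(sum_eq_zero_iff_of_nonneg hslack).1 hsum k (mem_univ k)]
  rw [Real.young_inequality_eq_iff_of_nonneg (hx k) (hy k) hpq] at hyoung
  -- `x = (x ^ p) ^ p⁻¹ = (y ^ q) ^ p⁻¹` and `q / p = q - 1`
  rw [← hpq.symm.div_conj_eq_sub_one, div_eq_mul_inv, Real.rpow_mul (hy k), ← hyoung,
    ← Real.rpow_mul (hx k), mul_inv_cancel₀ hpq.ne_zero, Real.rpow_one]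

end Holder

section Pnorm

variable {n : ℕ} {p q : ℝ}

lemma sum_abs_rpow_nonneg (q : ℝ) (y : Fin n → ℝ) : 0 ≤ ∑ j, |y j| ^ q :=
  sum_nonneg fun _ _ => Real.rpow_nonneg (abs_nonneg _) _

lemma pnorm_nonneg (q : ℝ) (y : Fin n → ℝ) : 0 ≤ pnorm q y :=
  Real.rpow_nonneg (sum_abs_rpow_nonneg q y) _

lemma pnorm_rpow (hq : 0 < q) (y : Fin n → ℝ) : pnorm q y ^ q = ∑ j, |y j| ^ q := by
  rw [pnorm, one_div, Real.rpow_inv_rpow (sum_abs_rpow_nonneg q y) hq.ne']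

lemma pnorm_eq_one_iff (hq : 0 < q) {y : Fin n → ℝ} : pnorm q y = 1 ↔ ∑ j, |y j| ^ q = 1 := by
  refine ⟨fun h => ?_, fun h => ?_⟩
  · rw [← pnorm_rpow hq, h, Real.one_rpow]
  · rw [pnorm, h, Real.one_rpow]

lemma pnorm_zero (hq : 0 < q) : pnorm q (0 : Fin n → ℝ) = 0 := by
  simp [pnorm, Real.zero_rpow hq.ne', Real.zero_rpow (inv_ne_zero hq.ne')]

lemma abs_le_pnorm (hq : 0 < q) (y : Fin n → ℝ) (j : Fin n) : |y j| ≤ pnorm q y := by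
  rw [← Real.rpow_rpow_inv (abs_nonneg (y j)) hq.ne', pnorm, one_div]
  exact Real.rpow_le_rpow (Real.rpow_nonneg (abs_nonneg _) _)
    (single_le_sum (fun k _ => Real.rpow_nonneg (abs_nonneg (y k)) q) (mem_univ j))
    (inv_nonneg.2 hq.le)

lemma pnorm_pos (hq : 0 < q) {y : Fin n → ℝ} (hy : y ≠ 0) : 0 < pnorm q y := by
  obtain ⟨j, hj⟩ := Function.ne_iff.1 hy
  exact (abs_pos.2 hj).trans_le (abs_le_pnorm hq y j)

lemma pnorm_smul (hq : 0 < q) (c : ℝ) (y : Fin n → ℝ) : pnorm q (c • y) = |c| * pnorm q y := by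
  simp only [pnorm, Pi.smul_apply, smul_eq_mul, abs_mul,
    Real.mul_rpow (abs_nonneg c) (abs_nonneg _), ← mul_sum]
  rw [Real.mul_rpow (Real.rpow_nonneg (abs_nonneg c) _) (sum_abs_rpow_nonneg q y),
    ← Real.rpow_mul (abs_nonneg c), mul_one_div_cancel hq.ne', Real.rpow_one]

lemma pnorm_abs (q : ℝ) (y : Fin n → ℝ) : pnorm q |y| = pnorm q y := by
  simp [pnorm]

lemma pnorm_single (hq : 0 < q) (j : Fin n) : pnorm q (Pi.single j 1) = 1 := by
  rw [pnorm_eq_one_iff hq, Fintype.sum_eq_single j fun k hk => by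
    simp [hk, Real.zero_rpow hq.ne']]
  simp

lemma continuous_pnorm (hq : 0 < q) : Continuous (pnorm q : (Fin n → ℝ) → ℝ) := by
  unfold pnorm
  fun_prop (disch := positivity)

lemma psi_of_nonneg (hq : 1 < q) {y : Fin n → ℝ} (hy : 0 ≤ y) (j : Fin n) :
    psi q y j = y j ^ (q - 1) := by
  rcases (hy j).eq_or_lt with h | h
  · simp [psi, ← h, Real.zero_rpow (sub_ne_zero.2 hq.ne')]
  · simp [psi, abs_of_pos h, Real.sign_of_pos h]

lemma sum_rpow_le_of_sum_mul_le (hpq : p.HolderConjugate q) {lam : ℝ} (hlam : 0 ≤ lam)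
    {g : Fin n → ℝ} (hg : 0 ≤ g) (hdual : ∀ y, ∑ k, y k * g k ≤ lam * pnorm p y) :
    ∑ k, g k ^ q ≤ lam ^ q := by
  set S := ∑ k, g k ^ q
  have hS : 0 ≤ S := sum_nonneg fun k _ => Real.rpow_nonneg (hg k) q
  -- Hölder's inequality against `g` is sharp at `y = g ^ (q - 1)`
  have htest := hdual fun k => g k ^ (q - 1)
  have hpair : ∑ k, g k ^ (q - 1) * g k = S := sum_congr rfl fun k _ => by
    rw [← Real.rpow_add_one' (hg k) (by simpa using hpq.symm.ne_zero), sub_add_cancel]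
  have hnorm : pnorm p (fun k => g k ^ (q - 1)) = S ^ p⁻¹ := by
    rw [pnorm, one_div]
    congr 1
    refine sum_congr rfl fun k _ => ?_
    rw [abs_of_nonneg (Real.rpow_nonneg (hg k) _), ← Real.rpow_mul (hg k),
      hpq.symm.sub_one_mul_conj]
  rw [hpair, hnorm] at htest
  rcases hS.eq_or_lt with h0 | hpos
  · rw [← h0]; exact Real.rpow_nonneg hlam q
  · have hsplit : S ^ q⁻¹ * S ^ p⁻¹ = S := by
      rw [← Real.rpow_add hpos, add_comm, hpq.inv_add_inv_eq_one, Real.rpow_one]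
    have hroot : S ^ q⁻¹ ≤ lam :=
      le_of_mul_le_mul_right (hsplit.trans_le htest) (Real.rpow_pos_of_pos hpos _)
    calc S = (S ^ q⁻¹) ^ q := (Real.rpow_inv_rpow hS hpq.symm.ne_zero).symm
      _ ≤ lam ^ q := Real.rpow_le_rpow (Real.rpow_nonneg hS _) hroot hpq.symm.nonneg

theorem rpow_sub_one_eq_of_sum_mul_le (hpq : p.HolderConjugate q) {lam : ℝ} (hlam : 0 < lam)
    {x g : Fin n → ℝ} (hx : 0 ≤ x) (hxp : pnorm p x = 1) (hg : 0 ≤ g)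
    (hxg : ∑ k, x k * g k = lam) (hdual : ∀ y, ∑ k, y k * g k ≤ lam * pnorm p y) (k : Fin n) :
    g k ^ (q - 1) = lam ^ (q - 1) * x k := by
  have hG : 0 ≤ fun k => g k / lam := fun k => div_nonneg (hg k) hlam.le
  have hxp' : ∑ k, x k ^ p = 1 := by
    simpa only [abs_of_nonneg (hx _)] using (pnorm_eq_one_iff hpq.pos).1 hxp
  have hGq : ∑ k, (g k / lam) ^ q ≤ 1 := by
    simp only [Real.div_rpow (hg _) hlam.le, ← sum_div]
    exact (div_le_one (Real.rpow_pos_of_pos hlam q)).2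
      (sum_rpow_le_of_sum_mul_le hpq hlam.le hg hdual)
  have hxG : ∑ k, x k * (g k / lam) = 1 := by
    simp only [mul_div_assoc', ← sum_div, hxg, div_self hlam.ne']
  have := rpow_sub_one_eq_of_sum_mul_eq_one hpq hx hG hxp' hGq hxG k
  rw [Real.div_rpow (hg k) hlam.le, div_eq_iff (Real.rpow_pos_of_pos hlam _).ne'] at this
  rw [this, mul_comm]

end Pnorm

section Form

variable (f : (∀ i, Fin (d i)) → ℝ)

def formMultilinear : MultilinearMap ℝ (fun i => Fin (d i) → ℝ) ℝ :=
  ∑ j : ∀ i, Fin (d i),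
    f j • (MultilinearMap.mkPiAlgebra ℝ (Fin m) ℝ).compLinearMap fun i => LinearMap.proj (j i)

@[simp]
lemma formMultilinear_apply (x : ∀ i, Fin (d i) → ℝ) : formMultilinear f x = form f x := by
  simp [formMultilinear, form]

lemma form_update (x : ∀ i, Fin (d i) → ℝ) (i : Fin m) (y : Fin (d i) → ℝ) :
    form f (Function.update x i y) = ∑ k, y k * grad f i x k := by
  have := LinearMap.pi_apply_eq_sum_univ ((formMultilinear f).toLinearMap x i) y
  simp only [MultilinearMap.toLinearMap_apply, formMultilinear_apply, smul_eq_mul] at this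
  simp_rw [this, grad, eq_comm]

lemma form_smul (c : Fin m → ℝ) (x : ∀ i, Fin (d i) → ℝ) :
    form f (fun i => c i • x i) = (∏ i, c i) * form f x := by
  simpa using (formMultilinear f).map_smul_univ c x

lemma form_eq_zero_of_eq_zero {x : ∀ i, Fin (d i) → ℝ} {i : Fin m} (h : x i = 0) :
    form f x = 0 := by
  simpa using (formMultilinear f).map_coord_zero i h

lemma continuous_form : Continuous (form f) := by
  unfold form
  fun_prop

lemma form_single (j : ∀ i, Fin (d i)) : form f (fun i => Pi.single (j i) 1) = f j := by
  rw [form, Fintype.sum_eq_single j fun j' hj' => ?_]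
  · simp
  · obtain ⟨i, hi⟩ := Function.ne_iff.1 hj'
    exact mul_eq_zero_of_right _ (prod_eq_zero (mem_univ i) (Pi.single_eq_of_ne hi 1))

variable {f}

lemma form_nonneg (hf : 0 ≤ f) {x : ∀ i, Fin (d i) → ℝ} (hx : 0 ≤ x) : 0 ≤ form f x :=
  sum_nonneg fun j _ => mul_nonneg (hf j) (prod_nonneg fun i _ => hx i (j i))

lemma abs_form_le (hf : 0 ≤ f) (x : ∀ i, Fin (d i) → ℝ) : |form f x| ≤ form f |x| := by
  refine (abs_sum_le_sum_abs _ _).trans_eq (sum_congr rfl fun j _ => ?_)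
  simp [abs_mul, abs_of_nonneg (hf j), abs_prod]

lemma grad_nonneg (hf : 0 ≤ f) {x : ∀ i, Fin (d i) → ℝ} (hx : 0 ≤ x) (i : Fin m) :
    0 ≤ grad f i x := fun k => by
  refine form_nonneg hf fun l => ?_
  rcases eq_or_ne l i with rfl | hl
  · intro k'; simp only [Function.update_self]; split_ifs <;> norm_num
  · simpa [Function.update_of_ne hl] using hx l

end Form

section PosSphere

variable {p : Fin m → ℝ} {f : (∀ i, Fin (d i)) → ℝ}

variable (p) in
def posSphere : Set (∀ i, Fin (d i) → ℝ) := {x | 0 ≤ x ∧ ∀ i, pnorm (p i) (x i) = 1}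

lemma single_mem_posSphere (hp : ∀ i, 0 < p i) (j : ∀ i, Fin (d i)) :
    (fun i => Pi.single (j i) 1) ∈ posSphere p :=
  ⟨fun i => show (0 : Fin (d i) → ℝ) ≤ Pi.single (j i) 1 from Pi.single_nonneg.2 zero_le_one,
    fun i => pnorm_single (hp i) (j i)⟩

lemma isCompact_posSphere (hp : ∀ i, 0 < p i) : IsCompact (posSphere (d := d) p) := by
  have hclosed : IsClosed (posSphere (d := d) p) := by
    simp only [posSphere, Set.ofPred_and, Set.ofPred_forall]
    exact (isClosed_le continuous_const continuous_id).inter <| isClosed_iInter fun i =>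
      isClosed_eq ((continuous_pnorm (hp i)).comp (continuous_apply i)) continuous_const
  refine (isCompact_closedBall 0 1).of_isClosed_subset hclosed fun x hx => ?_
  rw [mem_closedBall_zero_iff, pi_norm_le_iff_of_nonneg zero_le_one]
  refine fun i => (pi_norm_le_iff_of_nonneg zero_le_one).2 fun k => ?_
  simpa [hx.2 i] using abs_le_pnorm (hp i) (x i) k

lemma abs_form_le_of_isMaxOn (hp : ∀ i, 0 < p i) (hf : 0 ≤ f) {x : ∀ i, Fin (d i) → ℝ}
    (hx : x ∈ posSphere p) (hmax : IsMaxOn (form f) (posSphere p) x) (z : ∀ i, Fin (d i) → ℝ) :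
    |form f z| ≤ form f x * ∏ i, pnorm (p i) (z i) := by
  by_cases hz : ∃ i, z i = 0
  · obtain ⟨i, hi⟩ := hz
    rw [form_eq_zero_of_eq_zero f hi, abs_zero]
    exact mul_nonneg (form_nonneg hf hx.1) (prod_nonneg fun i _ => pnorm_nonneg _ _)
  push Not at hz
  set c := fun i => pnorm (p i) (z i)
  have hc : ∀ i, 0 < c i := fun i => pnorm_pos (hp i) (hz i)
  have hy : (fun i => (c i)⁻¹ • |z i|) ∈ posSphere p := by
    refine ⟨fun i k => ?_, fun i => ?_⟩
    · exact mul_nonneg (inv_nonneg.2 (hc i).le) (abs_nonneg _)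
    · rw [pnorm_smul (hp i), pnorm_abs, abs_of_pos (inv_pos.2 (hc i)), inv_mul_cancel₀ (hc i).ne']
  have hscale : |z| = fun i => c i • (c i)⁻¹ • |z i| := by
    ext i k
    simp only [Pi.abs_apply, Pi.smul_apply, smul_eq_mul, mul_inv_cancel_left₀ (hc i).ne']
  calc |form f z| ≤ form f |z| := abs_form_le hf z
    _ = (∏ i, c i) * form f (fun i => (c i)⁻¹ • |z i|) := by rw [hscale, form_smul]
    _ ≤ (∏ i, c i) * form f x := by
      gcongr
      · exact prod_nonneg fun i _ => (hc i).le
      · exact hmax hy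
    _ = form f x * ∏ i, c i := mul_comm _ _

lemma Qform_eq_form (hf : 0 ≤ f) {x : ∀ i, Fin (d i) → ℝ} (hx : x ∈ posSphere p) :
    Qform f p x = form f x := by
  rw [Qform, abs_of_nonneg (form_nonneg hf hx.1), prod_eq_one fun i _ => hx.2 i, div_one]

lemma tnorm_eq_form_of_isMaxOn (hp : ∀ i, 0 < p i) (hf : 0 ≤ f) {x : ∀ i, Fin (d i) → ℝ}
    (hx : x ∈ posSphere p) (hmax : IsMaxOn (form f) (posSphere p) x) :
    tnorm f p = form f x := by
  refine IsGreatest.csSup_eq ⟨⟨x, fun i h => ?_, (Qform_eq_form hf hx).symm⟩, ?_⟩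
  · simpa [h, pnorm_zero (hp i)] using hx.2 i
  rintro _ ⟨z, hz, rfl⟩
  rw [Qform, div_le_iff₀ (prod_pos fun i _ => pnorm_pos (hp i) (hz i))]
  exact abs_form_le_of_isMaxOn hp hf hx hmax z

end PosSphere

lemma isSingular_of_isMaxOn {p : Fin m → ℝ} (hp : ∀ i, 1 < p i) {f : (∀ i, Fin (d i)) → ℝ}
    (hf : 0 ≤ f) {x : ∀ i, Fin (d i) → ℝ} (hx : x ∈ posSphere p)
    (hmax : IsMaxOn (form f) (posSphere p) x) (hlam : 0 < form f x) :
    IsSingular f p (form f x) x := by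
  have hp0 : ∀ i, 0 < p i := fun i => zero_lt_one.trans (hp i)
  refine ⟨hx.2, fun i k => ?_⟩
  have hpair : ∑ k, x i k * grad f i x k = form f x := by
    rw [← form_update, Function.update_eq_self]
  have hdual : ∀ y, ∑ k, y k * grad f i x k ≤ form f x * pnorm (p i) y := fun y => by
    have hnorm : ∏ l, pnorm (p l) (Function.update x i y l) = pnorm (p i) y := by
      rw [Fintype.prod_eq_single i fun l hl => by rw [Function.update_of_ne hl, hx.2 l],
        Function.update_self]
    rw [← form_update, ← hnorm]
    exact (le_abs_self _).trans (abs_form_le_of_isMaxOn hp0 hf hx hmax _)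
  have hpq : (p i).HolderConjugate (conjExp (p i)) := .conjExponent (hp i)
  rw [sigma, Real.sign_of_pos hlam, one_mul,
    psi_of_nonneg hpq.symm.lt (grad_nonneg hf hx.1 i),
    rpow_sub_one_eq_of_sum_mul_le hpq hlam (hx.1 i) (hx.2 i) (grad_nonneg hf hx.1 i) hpair hdual]

theorem statement_8_general {m : ℕ} {d : Fin m → ℕ}
    (p : Fin m → ℝ) (hp : ∀ k, 1 < p k)
    (f : (∀ i, Fin (d i)) → ℝ) (hf0 : ∀ j, 0 ≤ f j) (hf : f ≠ 0) :
    ∃ (lam : ℝ) (x : ∀ l, Fin (d l) → ℝ),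
      (∀ l jl, 0 ≤ x l jl) ∧ IsSingular f p lam x ∧ Qform f p x = tnorm f p := by
  have hp0 : ∀ i, 0 < p i := fun i => zero_lt_one.trans (hp i)
  obtain ⟨j, hj⟩ : ∃ j, 0 < f j := by
    by_contra! h
    exact hf (funext fun j => le_antisymm (h j) (hf0 j))
  have hsingle := single_mem_posSphere (d := d) hp0 j
  obtain ⟨x, hx, hmax⟩ := (isCompact_posSphere hp0).exists_isMaxOn ⟨_, hsingle⟩
    (continuous_form f).continuousOn
  have hlam : 0 < form f x := hj.trans_le (form_single f j ▸ hmax hsingle)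
  exact ⟨form f x, x, hx.1, isSingular_of_isMaxOn hp hf0 hx hmax hlam,
    (Qform_eq_form hf0 hx).trans (tnorm_eq_form_of_isMaxOn hp0 hf0 hx hmax).symm⟩

/-- a nonnegative nonzero tensor has a nonnegative singular vector
`x* ∈ S^d_+` with `Q(x*) = ‖f‖_{p_1,…,p_m}`. -/
theorem statement_8 {m : ℕ} {d : Fin m → ℕ} (hm : 2 ≤ m) (hd : ∀ k, 0 < d k)
    (p : Fin m → ℝ) (hp : ∀ k, 1 < p k)
    (f : (∀ i, Fin (d i)) → ℝ) (hf0 : ∀ j, 0 ≤ f j) (hf : f ≠ 0) :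
    ∃ (lam : ℝ) (x : ∀ l, Fin (d l) → ℝ),
      (∀ l jl, 0 ≤ x l jl) ∧ IsSingular f p lam x ∧ Qform f p x = tnorm f p :=
  statement_8_general p hp f hf0 hf

end TensorPF
end
end

section
/- Let f ∈ ℝ^{d_1×…×d_m} be a nonnegative weakly irreducible tensor, 1 < p_1,…,p_m < ∞, i ∈ [m], and x, y ∈ ℝ^{d−d_i} with 0 < x ≤ y entrywise and x ≠ y. Define J_ν := {j_ν ∈ [d_ν] : x_{ν,j_ν} = y_{ν,j_ν}} for ν ∈ [m]\{i}, J_i := {j_i ∈ [d_i] : (ψ_{p_i'}(∇_i f(x)))_{j_i} = (ψ_{p_i'}(∇_i f(y)))_{j_i}}, I_ν := {j_ν ∈ [d_ν] : s_{i,ν,j_ν}(x) = s_{i,ν,j_ν}(y)} for ν ∈ [m]\{i}, I_i := J_i, and set J := ∪_{ν∈[m]} {ν}×J_ν and I := ∪_{ν∈[m]} {ν}×I_ν. Then I ⊆ J, and if J ≠ ∅ then I ≠ J. -/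
/-!
Common setup: tensors `f : (∀ i, Fin (d i)) → ℝ`, the induced multilinear form,
partial gradients, `ψ_q`, `ℓ^p` norms, Hölder conjugates, singular vectors,
(weak) irreducibility, the maps `σ_i`, `s_{i,k}`, `T_α`, `G`, the quantities
`Q`, `‖f‖_{p_1,…,p_m}`, `Q_i`, `γ_i^±` and the Hilbert-type metric `μ`.
Points of `ℝ^{d-d_i}` are encoded as full tuples (the maps involved do not
depend on the `i`-th component), with conditions imposed only for `k ≠ i`.
-/

open Finset Filter

noncomputable section

namespace TensorPF

variable {m : ℕ} {d : Fin m → ℕ}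

/-!
Write `A = (x_1,…,ψ_{p_i'}(∇_i f(x)),…,x_m)` (`withPsiGrad f p i x`) and `B` for the same tuple
built from `y`, so that `s_{i,k}(x) = ψ_{p_k'}(∇_k f(A))`, `0 < A ≤ B`, and `J` is exactly the
set of vertices where `A` and `B` agree. Since `f ≥ 0`, an equality
`∇_k f(A)_{j_k} = ∇_k f(B)_{j_k}` can only hold if `A` and `B` agree on every entry of every
positive term of that partial sum, that is on every neighbour of `(k, j_k)` in the graph of `f`.
Hence all neighbours of a vertex of `I` lie in `J`. A vertex of `I` outside the `i`-th part has a
neighbour in the `i`-th part, where `I` and `J` coincide, which gives `I ⊆ J`. If `I = J`, then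
`J` is closed under adjacency, so by connectedness it is empty or everything; but `x ≠ y`
excludes the latter.
-/

theorem _root_.SimpleGraph.Reachable.mem_of_adj_closed {V : Type*} {G : SimpleGraph V} {S : Set V}
    (hS : ∀ a ∈ S, ∀ b, G.Adj a b → b ∈ S) {a b : V} (hab : G.Reachable a b) (ha : a ∈ S) :
    b ∈ S := by
  obtain ⟨w⟩ := hab
  induction w with
  | nil => exact ha
  | cons hadj _ ih => exact ih (hS _ ha _ hadj)

section Psi

variable {n : ℕ} {q : ℝ} {y z : Fin n → ℝ} {j : Fin n}

lemma psi_apply_of_pos (h : 0 < y j) : psi q y j = y j ^ (q - 1) := by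
  rw [psi, abs_of_pos h, Real.sign_of_pos h, mul_one]

lemma psi_pos (h : 0 < y j) : 0 < psi q y j := by
  rw [psi_apply_of_pos h]
  exact Real.rpow_pos_of_pos h _

lemma psi_le_psi (hq : 1 ≤ q) (hy : 0 < y j) (h : y j ≤ z j) : psi q y j ≤ psi q z j := by
  rw [psi_apply_of_pos hy, psi_apply_of_pos (hy.trans_le h)]
  exact Real.rpow_le_rpow hy.le h (by linarith)

lemma eq_of_psi_eq (hq : 1 < q) (hy : 0 < y j) (hz : 0 < z j) (h : psi q y j = psi q z j) :
    y j = z j := by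
  rwa [psi_apply_of_pos hy, psi_apply_of_pos hz, Real.rpow_left_inj hy.le hz.le (by linarith)]
    at h

end Psi

lemma one_lt_conjExp {q : ℝ} (hq : 1 < q) : 1 < conjExp q :=
  (one_lt_div (sub_pos.2 hq)).2 (by linarith)

section Gradient

variable {f : (∀ l, Fin (d l)) → ℝ} {k : Fin m} {u v : ∀ l, Fin (d l) → ℝ}

lemma grad_apply (jk : Fin (d k)) :
    grad f k u jk = ∑ j with j k = jk, f j * ∏ l ∈ univ.erase k, u l (j l) := by
  rw [sum_filter, grad]
  refine sum_congr rfl fun j _ => ?_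
  rw [← mul_prod_erase univ _ (mem_univ k), Function.update_self,
    prod_congr rfl fun l hl => by rw [Function.update_of_ne (ne_of_mem_erase hl)]]
  split_ifs <;> simp

lemma grad_update_self (w : Fin (d k) → ℝ) : grad f k (Function.update u k w) = grad f k u := by
  ext jk
  simp only [grad, Function.update_idem]

lemma grad_le_grad (hf0 : ∀ j, 0 ≤ f j) (hu : ∀ l ≠ k, ∀ jl, 0 ≤ u l jl)
    (huv : ∀ l ≠ k, ∀ jl, u l jl ≤ v l jl) (jk : Fin (d k)) :
    grad f k u jk ≤ grad f k v jk := by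
  rw [grad_apply, grad_apply]
  exact sum_le_sum fun j _ => mul_le_mul_of_nonneg_left
    (prod_le_prod (fun l hl => hu l (ne_of_mem_erase hl) _)
      (fun l hl => huv l (ne_of_mem_erase hl) _)) (hf0 j)

lemma grad_lt_grad (hf0 : ∀ j, 0 ≤ f j) (hu : ∀ l ≠ k, ∀ jl, 0 < u l jl)
    (huv : ∀ l ≠ k, ∀ jl, u l jl ≤ v l jl) {j : ∀ l, Fin (d l)} (hj : 0 < f j)
    {l : Fin m} (hlk : l ≠ k) (hlt : u l (j l) < v l (j l)) :
    grad f k u (j k) < grad f k v (j k) := by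
  rw [grad_apply, grad_apply]
  refine sum_lt_sum (fun j' _ => mul_le_mul_of_nonneg_left
    (prod_le_prod (fun l hl => (hu l (ne_of_mem_erase hl) _).le)
      (fun l hl => huv l (ne_of_mem_erase hl) _)) (hf0 j')) ⟨j, by simp, ?_⟩
  refine mul_lt_mul_of_pos_left ?_ hj
  exact prod_lt_prod (fun l hl => hu l (ne_of_mem_erase hl) _)
    (fun l hl => huv l (ne_of_mem_erase hl) _) ⟨l, mem_erase.2 ⟨hlk, mem_univ l⟩, hlt⟩

lemma grad_pos (hf0 : ∀ j, 0 ≤ f j) (hcov : ∀ k (jk : Fin (d k)), ∃ j, j k = jk ∧ 0 < f j)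
    (hu : ∀ l ≠ k, ∀ jl, 0 < u l jl) (jk : Fin (d k)) : 0 < grad f k u jk := by
  obtain ⟨j, rfl, hj⟩ := hcov k jk
  rw [grad_apply]
  refine sum_pos' (fun j' _ => mul_nonneg (hf0 j')
    (prod_nonneg fun l hl => (hu l (ne_of_mem_erase hl) _).le)) ⟨j, by simp, ?_⟩
  exact mul_pos hj (prod_pos fun l hl => hu l (ne_of_mem_erase hl) _)

lemma eq_of_adj_of_grad_eq (hf0 : ∀ j, 0 ≤ f j) (hu : ∀ l ≠ k, ∀ jl, 0 < u l jl)
    (huv : ∀ l ≠ k, ∀ jl, u l jl ≤ v l jl) {jk : Fin (d k)} {b : (l : Fin m) × Fin (d l)}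
    (hadj : (wGraph f).Adj ⟨k, jk⟩ b) (heq : grad f k u jk = grad f k v jk) :
    u b.1 b.2 = v b.1 b.2 := by
  obtain ⟨hkb, j, rfl, hjb, hj⟩ :
      k ≠ b.1 ∧ ∃ j : ∀ l, Fin (d l), j k = jk ∧ j b.1 = b.2 ∧ 0 < f j := hadj
  rw [← hjb]
  by_contra hne
  exact (grad_lt_grad hf0 hu huv hj (Ne.symm hkb) ((huv _ (Ne.symm hkb) _).lt_of_ne hne)).ne
    heq

end Gradient

lemma WeaklyIrreducible.exists_pos_entry {f : (∀ l, Fin (d l)) → ℝ} (hm : 2 ≤ m)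
    (hd : ∀ k, 0 < d k) (hwirr : WeaklyIrreducible f) (k : Fin m) (jk : Fin (d k)) :
    ∃ j, j k = jk ∧ 0 < f j := by
  have : Nontrivial ((l : Fin m) × Fin (d l)) :=
    ⟨⟨⟨0, by omega⟩, ⟨0, hd _⟩⟩, ⟨⟨1, by omega⟩, ⟨0, hd _⟩⟩, by simp [Fin.ext_iff]⟩
  obtain ⟨_, -, j, hjk, -, hj⟩ := hwirr.preconnected.exists_adj_of_nontrivial ⟨k, jk⟩
  exact ⟨j, hjk, hj⟩

section ComparisonSets

variable {f : (∀ l, Fin (d l)) → ℝ} {p : Fin m → ℝ} {i : Fin m} {x y : ∀ l, Fin (d l) → ℝ}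

def withPsiGrad (f : (∀ l, Fin (d l)) → ℝ) (p : Fin m → ℝ) (i : Fin m)
    (x : ∀ l, Fin (d l) → ℝ) : ∀ l, Fin (d l) → ℝ :=
  Function.update x i (psi (conjExp (p i)) (grad f i x))

/-- The set `J` of the paper. -/
def equalitySet (f : (∀ l, Fin (d l)) → ℝ) (p : Fin m → ℝ) (i : Fin m)
    (x y : ∀ l, Fin (d l) → ℝ) : Set ((l : Fin m) × Fin (d l)) :=
  {a | if h : a.1 = i then
      psi (conjExp (p i)) (grad f i x) (Fin.cast (congrArg d h) a.2) =
        psi (conjExp (p i)) (grad f i y) (Fin.cast (congrArg d h) a.2)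
    else x a.1 a.2 = y a.1 a.2}

/-- The set `I` of the paper. -/
def sikEqualitySet (f : (∀ l, Fin (d l)) → ℝ) (p : Fin m → ℝ) (i : Fin m)
    (x y : ∀ l, Fin (d l) → ℝ) : Set ((l : Fin m) × Fin (d l)) :=
  {a | if h : a.1 = i then
      psi (conjExp (p i)) (grad f i x) (Fin.cast (congrArg d h) a.2) =
        psi (conjExp (p i)) (grad f i y) (Fin.cast (congrArg d h) a.2)
    else sik f p i a.1 x a.2 = sik f p i a.1 y a.2}

lemma mem_equalitySet_iff {a : (l : Fin m) × Fin (d l)} :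
    a ∈ equalitySet f p i x y ↔ withPsiGrad f p i x a.1 a.2 = withPsiGrad f p i y a.1 a.2 := by
  obtain ⟨k, jk⟩ := a
  by_cases hk : k = i
  · subst hk
    simp [equalitySet, withPsiGrad]
  · simp [equalitySet, withPsiGrad, hk]

lemma mem_sikEqualitySet_iff_of_fst_eq {a : (l : Fin m) × Fin (d l)} (h : a.1 = i) :
    a ∈ sikEqualitySet f p i x y ↔ a ∈ equalitySet f p i x y := by
  simp only [sikEqualitySet, equalitySet, Set.mem_ofPred_eq, dif_pos h]

lemma withPsiGrad_pos (hf0 : ∀ j, 0 ≤ f j)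
    (hcov : ∀ k (jk : Fin (d k)), ∃ j, j k = jk ∧ 0 < f j) (hx : ∀ l ≠ i, ∀ jl, 0 < x l jl)
    (l : Fin m) (jl : Fin (d l)) : 0 < withPsiGrad f p i x l jl := by
  by_cases hl : l = i
  · subst hl
    simpa [withPsiGrad] using psi_pos (grad_pos hf0 hcov hx jl)
  · simpa [withPsiGrad, hl] using hx l hl jl

lemma withPsiGrad_le_withPsiGrad (hp : 1 < p i) (hf0 : ∀ j, 0 ≤ f j)
    (hcov : ∀ k (jk : Fin (d k)), ∃ j, j k = jk ∧ 0 < f j) (hx : ∀ l ≠ i, ∀ jl, 0 < x l jl)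
    (hxy : ∀ l ≠ i, ∀ jl, x l jl ≤ y l jl) (l : Fin m) (jl : Fin (d l)) :
    withPsiGrad f p i x l jl ≤ withPsiGrad f p i y l jl := by
  by_cases hl : l = i
  · subst hl
    simpa [withPsiGrad] using psi_le_psi (one_lt_conjExp hp).le (grad_pos hf0 hcov hx jl)
      (grad_le_grad hf0 (fun l hl jl => (hx l hl jl).le) hxy jl)
  · simpa [withPsiGrad, hl] using hxy l hl jl

lemma grad_withPsiGrad_eq_of_mem_sikEqualitySet (hp : ∀ k, 1 < p k) (hf0 : ∀ j, 0 ≤ f j)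
    (hcov : ∀ k (jk : Fin (d k)), ∃ j, j k = jk ∧ 0 < f j) (hx : ∀ l ≠ i, ∀ jl, 0 < x l jl)
    (hxy : ∀ l ≠ i, ∀ jl, x l jl ≤ y l jl) {a : (l : Fin m) × Fin (d l)}
    (ha : a ∈ sikEqualitySet f p i x y) :
    grad f a.1 (withPsiGrad f p i x) a.2 = grad f a.1 (withPsiGrad f p i y) a.2 := by
  have hy : ∀ l ≠ i, ∀ jl, 0 < y l jl := fun l hl jl => (hx l hl jl).trans_le (hxy l hl jl)
  obtain ⟨k, jk⟩ := a
  by_cases hk : k = i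
  · subst hk
    simp only [sikEqualitySet, Set.mem_ofPred_eq, dif_pos, Fin.cast_eq_self] at ha
    simp only [withPsiGrad, grad_update_self]
    exact eq_of_psi_eq (one_lt_conjExp (hp k)) (grad_pos hf0 hcov hx jk)
      (grad_pos hf0 hcov hy jk) ha
  · simp only [sikEqualitySet, Set.mem_ofPred_eq, dif_neg hk] at ha
    exact eq_of_psi_eq (one_lt_conjExp (hp k))
      (grad_pos hf0 hcov (fun l _ => withPsiGrad_pos hf0 hcov hx l) jk)
      (grad_pos hf0 hcov (fun l _ => withPsiGrad_pos hf0 hcov hy l) jk) ha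

lemma mem_equalitySet_of_adj (hp : ∀ k, 1 < p k) (hf0 : ∀ j, 0 ≤ f j)
    (hcov : ∀ k (jk : Fin (d k)), ∃ j, j k = jk ∧ 0 < f j) (hx : ∀ l ≠ i, ∀ jl, 0 < x l jl)
    (hxy : ∀ l ≠ i, ∀ jl, x l jl ≤ y l jl) {a b : (l : Fin m) × Fin (d l)}
    (ha : a ∈ sikEqualitySet f p i x y) (hab : (wGraph f).Adj a b) :
    b ∈ equalitySet f p i x y :=
  mem_equalitySet_iff.2 <| eq_of_adj_of_grad_eq hf0
    (fun l _ => withPsiGrad_pos hf0 hcov hx l)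
    (fun l _ => withPsiGrad_le_withPsiGrad (hp i) hf0 hcov hx hxy l) hab
    (grad_withPsiGrad_eq_of_mem_sikEqualitySet hp hf0 hcov hx hxy ha)

lemma sikEqualitySet_subset_equalitySet (hp : ∀ k, 1 < p k) (hf0 : ∀ j, 0 ≤ f j)
    (hcov : ∀ k (jk : Fin (d k)), ∃ j, j k = jk ∧ 0 < f j) (hx : ∀ l ≠ i, ∀ jl, 0 < x l jl)
    (hxy : ∀ l ≠ i, ∀ jl, x l jl ≤ y l jl) :
    sikEqualitySet f p i x y ⊆ equalitySet f p i x y := by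
  intro a ha
  by_cases hai : a.1 = i
  · exact (mem_sikEqualitySet_iff_of_fst_eq hai).1 ha
  obtain ⟨j, hja, hj⟩ := hcov a.1 a.2
  have hab : (wGraph f).Adj a ⟨i, j i⟩ := ⟨hai, j, hja, rfl, hj⟩
  have hb : (⟨i, j i⟩ : (l : Fin m) × Fin (d l)) ∈ sikEqualitySet f p i x y :=
    (mem_sikEqualitySet_iff_of_fst_eq rfl).2 (mem_equalitySet_of_adj hp hf0 hcov hx hxy ha hab)
  exact mem_equalitySet_of_adj hp hf0 hcov hx hxy hb hab.symm

lemma sikEqualitySet_ne_equalitySet (hp : ∀ k, 1 < p k) (hf0 : ∀ j, 0 ≤ f j)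
    (hwirr : WeaklyIrreducible f) (hcov : ∀ k (jk : Fin (d k)), ∃ j, j k = jk ∧ 0 < f j)
    (hx : ∀ l ≠ i, ∀ jl, 0 < x l jl) (hxy : ∀ l ≠ i, ∀ jl, x l jl ≤ y l jl)
    (hne : ∃ l, l ≠ i ∧ x l ≠ y l) (hJ : (equalitySet f p i x y).Nonempty) :
    sikEqualitySet f p i x y ≠ equalitySet f p i x y := by
  intro hIJ
  obtain ⟨a, ha⟩ := hJ
  obtain ⟨l, hli, hxyl⟩ := hne
  obtain ⟨jl, hjl⟩ := Function.ne_iff.1 hxyl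
  have hclosed : ∀ a ∈ equalitySet f p i x y, ∀ b, (wGraph f).Adj a b →
      b ∈ equalitySet f p i x y :=
    fun a ha _ hab => mem_equalitySet_of_adj hp hf0 hcov hx hxy (hIJ ▸ ha) hab
  have hlJ := (hwirr.preconnected a ⟨l, jl⟩).mem_of_adj_closed hclosed ha
  simp only [equalitySet, Set.mem_ofPred_eq, dif_neg hli] at hlJ
  exact hjl hlJ

end ComparisonSets

/-- the comparison lemma for the sets `I` and `J` associated to
`0 < x ≤ y`, `x ≠ y` in `ℝ^{d-d_i}` (encoded as full tuples; the `i`-th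
vertices `(i,j_i)` carry the condition on `ψ_{p_i'}(∇_i f(·))`). -/
theorem statement_12 {m : ℕ} {d : Fin m → ℕ} (hm : 2 ≤ m) (hd : ∀ k, 0 < d k)
    (p : Fin m → ℝ) (hp : ∀ k, 1 < p k)
    (f : (∀ i, Fin (d i)) → ℝ) (hf0 : ∀ j, 0 ≤ f j)
    (hwirr : WeaklyIrreducible f) (i : Fin m)
    (x y : ∀ l, Fin (d l) → ℝ)
    (hxpos : ∀ l, l ≠ i → ∀ jl, 0 < x l jl)
    (hxy : ∀ l, l ≠ i → ∀ jl, x l jl ≤ y l jl)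
    (hne : ∃ l, l ≠ i ∧ x l ≠ y l) :
    (({a : (l : Fin m) × Fin (d l) |
        if h : a.1 = i then
          psi (conjExp (p i)) (grad f i x) (Fin.cast (congrArg d h) a.2) =
            psi (conjExp (p i)) (grad f i y) (Fin.cast (congrArg d h) a.2)
        else sik f p i a.1 x a.2 = sik f p i a.1 y a.2}) ⊆
      ({a : (l : Fin m) × Fin (d l) |
        if h : a.1 = i then
          psi (conjExp (p i)) (grad f i x) (Fin.cast (congrArg d h) a.2) =
            psi (conjExp (p i)) (grad f i y) (Fin.cast (congrArg d h) a.2)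
        else x a.1 a.2 = y a.1 a.2})) ∧
    (Set.Nonempty ({a : (l : Fin m) × Fin (d l) |
        if h : a.1 = i then
          psi (conjExp (p i)) (grad f i x) (Fin.cast (congrArg d h) a.2) =
            psi (conjExp (p i)) (grad f i y) (Fin.cast (congrArg d h) a.2)
        else x a.1 a.2 = y a.1 a.2}) →
      ({a : (l : Fin m) × Fin (d l) |
        if h : a.1 = i then
          psi (conjExp (p i)) (grad f i x) (Fin.cast (congrArg d h) a.2) =
            psi (conjExp (p i)) (grad f i y) (Fin.cast (congrArg d h) a.2)
        else sik f p i a.1 x a.2 = sik f p i a.1 y a.2}) ≠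
      ({a : (l : Fin m) × Fin (d l) |
        if h : a.1 = i then
          psi (conjExp (p i)) (grad f i x) (Fin.cast (congrArg d h) a.2) =
            psi (conjExp (p i)) (grad f i y) (Fin.cast (congrArg d h) a.2)
        else x a.1 a.2 = y a.1 a.2})) := by
  have hcov := hwirr.exists_pos_entry hm hd
  exact ⟨sikEqualitySet_subset_equalitySet hp hf0 hcov hxpos hxy,
    sikEqualitySet_ne_equalitySet hp hf0 hwirr hcov hxpos hxy hne⟩

end TensorPF
end
end
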